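/- arXiv:1009.5326 — 2 statements merged into one kernel-verified Lean document; each statement's English description precedes it below -/
import Mathlib

section
/- Let D ⊂ ℝ² be a bounded measurable set with rotational symmetry of order N ≥ 3 (so its centroid is at the origin), and let T be an invertible 2×2 real matrix. Then I₀(T(D)) = (1/2) I₀(D) ‖T‖²_HS |det T|, where I₀(E) = ∫_E |x|² dx. -/
/-! The second-moment matrix `M = ∫_D x xᵀ` becomes `R M Rᵀ` under a change of variables
`x ↦ R x` with `|det R| = 1`, so the symmetry of `D` gives `R M Rᵀ = M` for the rotation `R`
by `2π/N`. As `2π/N` is not a multiple of `π`, a symmetric matrix fixed by this conjugation is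
scalar, `M = c • 1`. Hence `∫_D |T x|² = tr (T M Tᵀ) = c ‖T‖²_HS` and `∫_D |x|² = 2c`, while the
substitution `x ↦ T x` contributes the factor `|det T|`. -/

open MeasureTheory Real Set

noncomputable section

def rot (θ : ℝ) : Matrix (Fin 2) (Fin 2) ℝ :=
  !![Real.cos θ, -Real.sin θ; Real.sin θ, Real.cos θ]

open Matrix

theorem Continuous.integrableOn_of_isBounded {X E : Type*} [MetricSpace X] [ProperSpace X]
    [MeasurableSpace X] [OpensMeasurableSpace X] [NormedAddCommGroup E] {μ : Measure X}
    [IsFiniteMeasureOnCompacts μ] {f : X → E} (hf : Continuous f) {s : Set X}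
    (hs : Bornology.IsBounded s) : IntegrableOn f s μ :=
  (hf.continuousOn.integrableOn_compact hs.isCompact_closure).mono_set subset_closure

section SecondMoment

variable {n : Type*} [Fintype n]

theorem setIntegral_image_mulVec [DecidableEq n] {E : Type*} [NormedAddCommGroup E]
    [NormedSpace ℝ E] (A : Matrix n n ℝ) (hA : IsUnit A.det) {D : Set (n → ℝ)}
    (hD : MeasurableSet D) (g : (n → ℝ) → E) :
    ∫ x in (A *ᵥ ·) '' D, g x = |A.det| • ∫ x in D, g (A *ᵥ x) := by
  let L : (n → ℝ) →L[ℝ] (n → ℝ) := LinearMap.toContinuousLinearMap (Matrix.toLin' A)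
  have hL : ⇑L = (A *ᵥ ·) := rfl
  have hinj : InjOn L D :=
    (mulVec_injective_iff_isUnit.mpr ((isUnit_iff_isUnit_det A).mpr hA)).injOn
  have hdet : L.det = A.det := LinearMap.det_toLin' A
  rw [← hL, integral_image_eq_integral_abs_det_fderiv_smul volume hD
    (fun x _ => L.hasFDerivAt.hasFDerivWithinAt) hinj g, hdet, integral_smul]
  rfl

def secondMoment (D : Set (n → ℝ)) : Matrix n n ℝ :=
  Matrix.of fun i j => ∫ x in D, x i * x j

theorem secondMoment_isSymm (D : Set (n → ℝ)) : (secondMoment D).IsSymm := by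
  ext i j
  simp only [secondMoment, transpose_apply, of_apply, mul_comm]

variable {D : Set (n → ℝ)}

theorem setIntegral_dotProduct_mul_dotProduct (hD : Bornology.IsBounded D) (u v : n → ℝ) :
    ∫ x in D, (u ⬝ᵥ x) * (v ⬝ᵥ x) = u ⬝ᵥ (secondMoment D *ᵥ v) := by
  have hint : ∀ i j, IntegrableOn (fun x : n → ℝ => x i * x j) D := fun i j =>
    ((continuous_apply i).mul (continuous_apply j)).integrableOn_of_isBounded hD
  have hexpand : ∀ x : n → ℝ,
      (u ⬝ᵥ x) * (v ⬝ᵥ x) = ∑ i, ∑ j, u i * v j * (x i * x j) := by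
    intro x
    simp only [dotProduct, Finset.sum_mul_sum]
    exact Finset.sum_congr rfl fun i _ => Finset.sum_congr rfl fun j _ => by ring
  simp_rw [hexpand]
  rw [integral_finsetSum _ fun i _ => integrable_finsetSum _ fun j _ => (hint i j).const_mul _]
  simp_rw [integral_finsetSum _ fun j _ => (hint _ j).const_mul _, integral_const_mul]
  simp only [dotProduct, mulVec, secondMoment, of_apply, Finset.mul_sum]
  exact Finset.sum_congr rfl fun i _ => Finset.sum_congr rfl fun j _ => by ring

theorem mul_secondMoment_mul_transpose_of_image_eq [DecidableEq n] {R : Matrix n n ℝ}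
    (hR : |R.det| = 1) (hD : MeasurableSet D) (hDb : Bornology.IsBounded D)
    (hRD : (R *ᵥ ·) '' D = D) : R * secondMoment D * Rᵀ = secondMoment D := by
  have hunit : IsUnit R.det := isUnit_iff_ne_zero.mpr fun h => by simp [h] at hR
  ext i j
  have hinv : secondMoment D i j = ∫ x in D, (R i ⬝ᵥ x) * (R j ⬝ᵥ x) := by
    conv_lhs => rw [secondMoment, of_apply, ← hRD]
    rw [setIntegral_image_mulVec R hunit hD, hR, one_smul]
    rfl
  rw [hinv, setIntegral_dotProduct_mul_dotProduct hDb]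
  simp only [mul_apply, transpose_apply, dotProduct, mulVec, Finset.sum_mul, Finset.mul_sum]
  rw [Finset.sum_comm]
  exact Finset.sum_congr rfl fun k _ => Finset.sum_congr rfl fun l _ => by ring

theorem setIntegral_sum_sq_mulVec_of_secondMoment_eq {m : Type*} [Fintype m] [DecidableEq n]
    (hD : Bornology.IsBounded D) {c : ℝ} (hc : secondMoment D = c • 1) (A : Matrix m n ℝ) :
    ∫ x in D, ∑ k, (A *ᵥ x) k ^ 2 = c * ∑ k, ∑ j, A k j ^ 2 := by
  have hint : ∀ k, IntegrableOn (fun x : n → ℝ => (A k ⬝ᵥ x) * (A k ⬝ᵥ x)) D := fun k =>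
    (((continuous_const.dotProduct continuous_id).mul
      (continuous_const.dotProduct continuous_id))).integrableOn_of_isBounded hD
  have hrow : ∀ (x : n → ℝ) k, (A *ᵥ x) k = A k ⬝ᵥ x := fun _ _ => rfl
  simp_rw [hrow, sq]
  rw [integral_finsetSum _ fun k _ => hint k]
  simp_rw [setIntegral_dotProduct_mul_dotProduct hD, hc, smul_mulVec, one_mulVec,
    dotProduct_smul, smul_eq_mul]
  rw [← Finset.mul_sum]
  rfl

end SecondMoment

theorem det_rot (θ : ℝ) : (rot θ).det = 1 := by
  simp [rot, det_fin_two_of, ← sq]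

theorem eq_smul_one_of_rot_mul_mul_transpose {M : Matrix (Fin 2) (Fin 2) ℝ} (hM : M.IsSymm)
    {θ : ℝ} (hθ : sin θ ≠ 0) (h : rot θ * M * (rot θ)ᵀ = M) : M = M 0 0 • 1 := by
  have h00 := congrFun (congrFun h 0) 0
  have h01 := congrFun (congrFun h 0) 1
  have h10 : M 1 0 = M 0 1 := hM.apply 0 1
  simp only [rot, mul_apply, transpose_apply, Fin.sum_univ_two, of_apply, cons_val',
    cons_val_zero, cons_val_one, empty_val', cons_val_fin_one, h10] at h00 h01
  have pyth := sin_sq_add_cos_sq θ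
  have hab : M 0 0 = M 1 1 := by
    have : sin θ * (M 0 0 - M 1 1) = 0 := by
      linear_combination sin θ * (-h00 + M 0 0 * pyth) + cos θ * (h01 - M 0 1 * pyth)
        - sin θ * (M 0 0 - M 1 1) * pyth
    exact sub_eq_zero.mp ((mul_eq_zero.mp this).resolve_left hθ)
  have hm : M 0 1 = 0 := by
    have : sin θ ^ 2 * M 0 1 = 0 := by
      linear_combination (-1 / 2 : ℝ) * (h01 - M 0 1 * pyth) + cos θ * sin θ / 2 * hab
    exact (mul_eq_zero.mp this).resolve_left (pow_ne_zero 2 hθ)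
  ext i j
  fin_cases i <;> fin_cases j <;> simp [hab, hm, h10]

theorem sin_two_pi_div_ne_zero {N : ℕ} (hN : 3 ≤ N) : sin (2 * π / N) ≠ 0 := by
  have hN' : (3 : ℝ) ≤ N := by exact_mod_cast hN
  refine (sin_pos_of_pos_of_lt_pi (by positivity) ?_).ne'
  rw [div_lt_iff₀ (by positivity)]
  nlinarith [pi_pos]

/-- For a bounded measurable set `D ⊂ ℝ²` with rotational symmetry of order `N ≥ 3`
and an invertible 2×2 matrix `T`: `I₀(T(D)) = (1/2) I₀(D) ‖T‖²_HS |det T|`,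
where `I₀(E) = ∫_E |x|² dx`. -/
theorem inertia_linear_image (N : ℕ) (hN : 3 ≤ N) (D : Set (Fin 2 → ℝ))
    (hmeas : MeasurableSet D) (hbdd : Bornology.IsBounded D)
    (hsym : (fun x => (rot (2 * Real.pi / (N : ℝ))).mulVec x) '' D = D)
    (T : Matrix (Fin 2) (Fin 2) ℝ) (hT : IsUnit T.det) :
    (∫ x in (fun x => T.mulVec x) '' D, (x 0 ^ 2 + x 1 ^ 2))
      = (1 / 2) * (∫ x in D, (x 0 ^ 2 + x 1 ^ 2))
          * (∑ i : Fin 2, ∑ j : Fin 2, (T i j) ^ 2) * |T.det| := by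
  set c := secondMoment D 0 0
  have hc : secondMoment D = c • 1 :=
    eq_smul_one_of_rot_mul_mul_transpose (secondMoment_isSymm D) (sin_two_pi_div_ne_zero hN)
      (mul_secondMoment_mul_transpose_of_image_eq (by rw [det_rot, abs_one]) hmeas hbdd hsym)
  have hD : ∫ x in D, (x 0 ^ 2 + x 1 ^ 2) = c * 2 := by
    simpa [Fin.sum_univ_two, one_apply] using
      setIntegral_sum_sq_mulVec_of_secondMoment_eq hbdd hc (1 : Matrix (Fin 2) (Fin 2) ℝ)
  have hTD : ∫ x in D, ((T *ᵥ x) 0 ^ 2 + (T *ᵥ x) 1 ^ 2) = c * ∑ i, ∑ j, T i j ^ 2 := by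
    simpa only [Fin.sum_univ_two] using setIntegral_sum_sq_mulVec_of_secondMoment_eq hbdd hc T
  rw [setIntegral_image_mulVec T hT hmeas, smul_eq_mul, hTD, hD]
  ring

end
end

section
/- Let D be the square with vertices (±1,0) and (0,±1), and let T be the piecewise linear map equal to T_± = ((a, c_±),(0, b)) on the closed upper/lower halfplane respectively, with a ≠ 0, b > 0, c_± ∈ ℝ. Then (1/4)(‖T_+^{-1}‖²_HS + ‖T_-^{-1}‖²_HS) = [I₀/A³](T(D)) / [I₀/A³](D), where I₀(E) = ∫_E |x|² dx is the moment of inertia about the origin and A is area. -/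
/-!
Cut `D` along the `x₁`-axis into two triangles, on each of which `T` is linear. Each triangle
has area `1` and second-moment matrix `∫ x xᵀ = (1/6) I`, so for an invertible linear `M` the
change of variables gives `∫_{M(half)} |x|² = |det M| ‖M‖²_HS / 6` and area `|det M|`. Hence
`I₀(T(D)) = |ab| (‖T₊‖²_HS + ‖T₋‖²_HS) / 6` and `A(T(D)) = 2|ab|`, while `T = 1` gives
`I₀(D) = 2/3` and `A(D) = 2`. For `2 × 2` matrices the adjugate has the same entries up to
sign, so `‖M⁻¹‖²_HS = ‖M‖²_HS / det² M`, and the two sides agree.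
-/

open MeasureTheory Real Set

noncomputable section

/-- Area of a plane region. -/
def area (D : Set (Fin 2 → ℝ)) : ℝ := (volume D).toReal

/-- The square with vertices `(±1,0)` and `(0,±1)`. -/
def diamondSquare : Set (Fin 2 → ℝ) := {x | |x 0| + |x 1| < 1}

open scoped Matrix

namespace Matrix

variable {n : Type*} [Fintype n] [DecidableEq n]

theorem volume_image_mulVec (M : Matrix n n ℝ) (s : Set (n → ℝ)) :
    volume (M.mulVec '' s) = ENNReal.ofReal |M.det| * volume s := by
  rw [← funext (toLin'_apply M), Measure.addHaar_image_linearMap, LinearMap.det_toLin']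

theorem measurableSet_image_mulVec {M : Matrix n n ℝ} (hM : M.det ≠ 0) {s : Set (n → ℝ)}
    (hs : MeasurableSet s) : MeasurableSet (M.mulVec '' s) :=
  hs.image_of_continuousOn_injOn (continuous_const.matrix_mulVec continuous_id).continuousOn
    (mulVec_injective_of_det_ne_zero hM).injOn

theorem setIntegral_image_mulVec {E : Type*} [NormedAddCommGroup E] [NormedSpace ℝ E]
    {M : Matrix n n ℝ} (hM : M.det ≠ 0) {s : Set (n → ℝ)} (hs : MeasurableSet s)
    (g : (n → ℝ) → E) :
    ∫ x in M.mulVec '' s, g x = |M.det| • ∫ x in s, g (M *ᵥ x) := by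
  let L := LinearMap.toContinuousLinearMap (toLin' M)
  have hL : ⇑L = M.mulVec := funext (toLin'_apply M)
  rw [integral_image_eq_integral_abs_det_fderiv_smul volume hs (f' := fun _ => L)
    (fun x _ => hL ▸ L.hasFDerivAt.hasFDerivWithinAt)
    (mulVec_injective_of_det_ne_zero hM).injOn g, integral_smul]
  simp [L, ContinuousLinearMap.det, LinearMap.det_toLin']

theorem sum_sq_inv_fin_two (M : Matrix (Fin 2) (Fin 2) ℝ) :
    ∑ i, ∑ j, M⁻¹ i j ^ 2 = (∑ i, ∑ j, M i j ^ 2) / M.det ^ 2 := by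
  simp only [inv_def, det_fin_two, Ring.inverse_eq_inv', adjugate_fin_two, smul_apply, of_apply,
    cons_val', cons_val_fin_one, smul_eq_mul, mul_pow, inv_pow, Fin.sum_univ_two, cons_val_zero,
    cons_val_one, even_two, Even.neg_pow, div_eq_mul_inv]
  ring

end Matrix

-- `hmom` says that the second-moment matrix `∫_E x xᵀ` is `m • 1`.
theorem setIntegral_sq_image_mulVec_of_isotropic {E : Set (Fin 2 → ℝ)} (hE : MeasurableSet E)
    {m : ℝ} (hmom : ∀ A B C : ℝ,
      ∫ x in E, (A * x 0 ^ 2 + B * (x 0 * x 1) + C * x 1 ^ 2) = (A + C) * m)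
    {M : Matrix (Fin 2) (Fin 2) ℝ} (hM : M.det ≠ 0) :
    ∫ x in M.mulVec '' E, (x 0 ^ 2 + x 1 ^ 2) = |M.det| * m * ∑ i, ∑ j, M i j ^ 2 := by
  have hquad (x : Fin 2 → ℝ) : (M *ᵥ x) 0 ^ 2 + (M *ᵥ x) 1 ^ 2
      = (M 0 0 ^ 2 + M 1 0 ^ 2) * x 0 ^ 2 + 2 * (M 0 0 * M 0 1 + M 1 0 * M 1 1) * (x 0 * x 1)
        + (M 0 1 ^ 2 + M 1 1 ^ 2) * x 1 ^ 2 := by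
    simp only [Matrix.mulVec, dotProduct, Fin.sum_univ_two]
    ring
  simp_rw [Matrix.setIntegral_image_mulVec hM hE, hquad, hmom, Fin.sum_univ_two, smul_eq_mul]
  ring

theorem setIntegral_regionBetween {α E : Type*} [MeasurableSpace α] [NormedAddCommGroup E]
    [NormedSpace ℝ E] {μ : Measure α} [SFinite μ] {f g : α → ℝ} {s : Set α}
    (hf : Measurable f) (hg : Measurable g) (hs : MeasurableSet s) {G : α × ℝ → E}
    (hG : IntegrableOn G (regionBetween f g s) (μ.prod volume)) :
    ∫ p in regionBetween f g s, G p ∂μ.prod volume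
      = ∫ x in s, (∫ y in Ioo (f x) (g x), G (x, y)) ∂μ := by
  have hR := measurableSet_regionBetween hf hg hs
  rw [← integral_indicator hR, integral_prod _ ((integrable_indicator_iff hR).2 hG),
    ← integral_indicator hs]
  congr 1 with x
  by_cases hx : x ∈ s
  · rw [indicator_of_mem hx, ← integral_indicator measurableSet_Ioo]
    congr 1 with y
    simp [regionBetween, indicator, hx]
  · simp [regionBetween, hx]

theorem measurePreserving_fin_two_swap :
    MeasurePreserving (fun x : Fin 2 → ℝ => (x 1, x 0)) volume (volume.prod volume) :=
  Measure.measurePreserving_swap.comp (volume_preserving_piFinTwo fun _ => ℝ)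

theorem measurableEmbedding_fin_two_swap :
    MeasurableEmbedding (fun x : Fin 2 → ℝ => (x 1, x 0)) :=
  MeasurableEquiv.prodComm.measurableEmbedding.comp
    (MeasurableEquiv.piFinTwo fun _ => ℝ).measurableEmbedding

theorem integral_cubic (c₀ c₁ c₂ c₃ u v : ℝ) :
    ∫ y in u..v, (c₀ + c₁ * y + c₂ * y ^ 2 + c₃ * y ^ 3)
      = c₀ * (v - u) + c₁ * (v ^ 2 - u ^ 2) / 2 + c₂ * (v ^ 3 - u ^ 3) / 3
        + c₃ * (v ^ 4 - u ^ 4) / 4 := by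
  have hderiv (y : ℝ) :
      HasDerivAt (fun y => c₀ * y + c₁ * y ^ 2 / 2 + c₂ * y ^ 3 / 3 + c₃ * y ^ 4 / 4)
        (c₀ + c₁ * y + c₂ * y ^ 2 + c₃ * y ^ 3) y :=
    ((((hasDerivAt_id y).const_mul c₀).add (((hasDerivAt_pow 2 y).const_mul c₁).div_const 2)).add
      (((hasDerivAt_pow 3 y).const_mul c₂).div_const 3)).add
      (((hasDerivAt_pow 4 y).const_mul c₃).div_const 4) |>.congr_deriv (by norm_num; ring)
  rw [intervalIntegral.integral_eq_sub_of_hasDerivAt (fun y _ => hderiv y)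
    (Continuous.intervalIntegrable (by fun_prop) _ _)]
  ring

def diamondSlab (s : Set ℝ) : Set (Fin 2 → ℝ) := diamondSquare ∩ {x | x 1 ∈ s}

theorem measurableSet_diamondSlab {s : Set ℝ} (hs : MeasurableSet s) :
    MeasurableSet (diamondSlab s) :=
  (measurableSet_lt (by fun_prop) measurable_const).inter (measurable_pi_apply 1 hs)

theorem diamondSlab_Ici_union_Iio :
    diamondSlab (Ici 0) ∪ diamondSlab (Iio 0) = diamondSquare := by
  rw [diamondSlab, diamondSlab, ← inter_union_distrib_left]
  simp only [← ofPred_or, mem_Ici, mem_Iio, le_or_gt, ofPred_true, inter_univ]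

theorem diamondSquare_subset_Icc : diamondSquare ⊆ Icc (-1) 1 := by
  intro x hx
  have h0 := abs_le.1 (show |x 0| ≤ 1 by linarith [abs_nonneg (x 1), hx.out])
  have h1 := abs_le.1 (show |x 1| ≤ 1 by linarith [abs_nonneg (x 0), hx.out])
  exact ⟨Fin.forall_fin_two.2 ⟨h0.1, h1.1⟩, Fin.forall_fin_two.2 ⟨h0.2, h1.2⟩⟩

theorem diamondSlab_eq_preimage_regionBetween (s : Set ℝ) :
    diamondSlab s = (fun x : Fin 2 → ℝ => (x 1, x 0)) ⁻¹'
      regionBetween (fun y => |y| - 1) (fun y => 1 - |y|) (s ∩ Ioo (-1) 1) := by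
  ext x
  have hx0 : |x 0| < 1 - |x 1| ↔ |x 1| - 1 < x 0 ∧ x 0 < 1 - |x 1| := by
    rw [abs_lt, neg_sub]
  simp only [diamondSlab, diamondSquare, regionBetween, mem_inter_iff, mem_ofPred_eq,
    mem_preimage, mem_Ioo, ← abs_lt, ← hx0]
  constructor
  · rintro ⟨hx, hs⟩
    exact ⟨⟨hs, by linarith [abs_nonneg (x 0)]⟩, by linarith⟩
  · rintro ⟨⟨hs, _⟩, hx⟩
    exact ⟨by linarith, hs⟩

theorem setIntegral_diamondSlab {s : Set ℝ} (hs : MeasurableSet s) {G : ℝ → ℝ → ℝ}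
    (hG : Continuous (Function.uncurry G)) :
    ∫ x in diamondSlab s, G (x 0) (x 1)
      = ∫ y in s ∩ Ioo (-1) 1, ∫ x in Ioo (|y| - 1) (1 - |y|), G x y := by
  have hsub : regionBetween (fun y => |y| - 1) (fun y => 1 - |y|) (s ∩ Ioo (-1) 1)
      ⊆ Icc (-1) 1 ×ˢ Icc (-1) 1 := by
    rintro ⟨y, x⟩ ⟨⟨_, hy⟩, hx⟩
    simp only [mem_Ioo] at hy hx
    refine ⟨⟨hy.1.le, hy.2.le⟩, ⟨?_, ?_⟩⟩ <;> linarith [abs_nonneg y]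
  rw [diamondSlab_eq_preimage_regionBetween,
    measurePreserving_fin_two_swap.setIntegral_preimage_emb measurableEmbedding_fin_two_swap
      (fun p => G p.2 p.1),
    setIntegral_regionBetween (by fun_prop) (by fun_prop) (hs.inter measurableSet_Ioo)]
  exact ((hG.comp continuous_swap).continuousOn.integrableOn_compact
    (isCompact_Icc.prod isCompact_Icc)).mono_set hsub

theorem setIntegral_diamondSlab_Ici_quadratic (K A B C : ℝ) :
    ∫ x in diamondSlab (Ici 0), (K + A * x 0 ^ 2 + B * (x 0 * x 1) + C * x 1 ^ 2)
      = K + (A + C) / 6 := by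
  have hs : Ici (0 : ℝ) ∩ Ioo (-1) 1 = Ico 0 1 := by
    ext y
    simp only [mem_inter_iff, mem_Ici, mem_Ioo, mem_Ico]
    exact ⟨fun h => ⟨h.1, h.2.2⟩, fun h => ⟨h.1, by linarith [h.1], h.2⟩⟩
  have hinner : ∀ y ∈ uIcc (0 : ℝ) 1,
      ∫ x in Ioo (|y| - 1) (1 - |y|), (K + A * x ^ 2 + B * (x * y) + C * y ^ 2)
        = (2 * K + 2 * A / 3) + (-2 * K - 2 * A) * y + (2 * A + 2 * C) * y ^ 2
          + (-2 * A / 3 - 2 * C) * y ^ 3 := by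
    intro y hy
    rw [uIcc_of_le zero_le_one] at hy
    rw [abs_of_nonneg hy.1, ← integral_Ioc_eq_integral_Ioo,
      ← intervalIntegral.integral_of_le (by linarith [hy.2]),
      intervalIntegral.integral_congr
        (g := fun x => (K + C * y ^ 2) + (B * y) * x + A * x ^ 2 + 0 * x ^ 3) (fun x _ => by ring),
      integral_cubic]
    ring
  rw [setIntegral_diamondSlab measurableSet_Ici
      (G := fun u v => K + A * u ^ 2 + B * (u * v) + C * v ^ 2) (by fun_prop),
    hs, integral_Ico_eq_integral_Ioo, ← integral_Ioc_eq_integral_Ioo,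
    ← intervalIntegral.integral_of_le zero_le_one, intervalIntegral.integral_congr hinner,
    integral_cubic]
  ring

theorem setIntegral_diamondSlab_Iio_quadratic (K A B C : ℝ) :
    ∫ x in diamondSlab (Iio 0), (K + A * x 0 ^ 2 + B * (x 0 * x 1) + C * x 1 ^ 2)
      = K + (A + C) / 6 := by
  have hs : Iio (0 : ℝ) ∩ Ioo (-1) 1 = Ioo (-1) 0 := by
    ext y
    simp only [mem_inter_iff, mem_Iio, mem_Ioo]
    exact ⟨fun h => ⟨h.2.1, h.1⟩, fun h => ⟨h.2, h.1, by linarith [h.2]⟩⟩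
  have hinner : ∀ y ∈ uIcc (-1 : ℝ) 0,
      ∫ x in Ioo (|y| - 1) (1 - |y|), (K + A * x ^ 2 + B * (x * y) + C * y ^ 2)
        = (2 * K + 2 * A / 3) + (2 * K + 2 * A) * y + (2 * A + 2 * C) * y ^ 2
          + (2 * A / 3 + 2 * C) * y ^ 3 := by
    intro y hy
    rw [uIcc_of_le (by norm_num)] at hy
    rw [abs_of_nonpos hy.2, ← integral_Ioc_eq_integral_Ioo,
      ← intervalIntegral.integral_of_le (by linarith [hy.1]),
      intervalIntegral.integral_congr
        (g := fun x => (K + C * y ^ 2) + (B * y) * x + A * x ^ 2 + 0 * x ^ 3) (fun x _ => by ring),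
      integral_cubic]
    ring
  rw [setIntegral_diamondSlab measurableSet_Iio
      (G := fun u v => K + A * u ^ 2 + B * (u * v) + C * v ^ 2) (by fun_prop),
    hs, ← integral_Ioc_eq_integral_Ioo, ← intervalIntegral.integral_of_le (by norm_num),
    intervalIntegral.integral_congr hinner, integral_cubic]
  ring

theorem volume_diamondSlab_Ici : volume (diamondSlab (Ici 0)) = 1 := by
  have h := setIntegral_diamondSlab_Ici_quadratic 1 0 0 0
  simp only [zero_mul, add_zero, zero_div, setIntegral_const, smul_eq_mul, mul_one,
    measureReal_def] at h
  exact (ENNReal.toReal_eq_one_iff _).1 h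

theorem volume_diamondSlab_Iio : volume (diamondSlab (Iio 0)) = 1 := by
  have h := setIntegral_diamondSlab_Iio_quadratic 1 0 0 0
  simp only [zero_mul, add_zero, zero_div, setIntegral_const, smul_eq_mul, mul_one,
    measureReal_def] at h
  exact (ENNReal.toReal_eq_one_iff _).1 h

theorem integrableOn_image_mulVec_diamondSlab {f : (Fin 2 → ℝ) → ℝ} (hf : Continuous f)
    (M : Matrix (Fin 2) (Fin 2) ℝ) (s : Set ℝ) : IntegrableOn f (M.mulVec '' diamondSlab s) :=
  (hf.continuousOn.integrableOn_compact
    (isCompact_Icc.image (continuous_const.matrix_mulVec continuous_id))).mono_set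
    (image_mono (inter_subset_left.trans diamondSquare_subset_Icc))

theorem image_ite_diamondSquare (f g : (Fin 2 → ℝ) → Fin 2 → ℝ) :
    (fun x => if 0 ≤ x 1 then f x else g x) '' diamondSquare
      = f '' diamondSlab (Ici 0) ∪ g '' diamondSlab (Iio 0) := by
  rw [← diamondSlab_Ici_union_Iio, image_union]
  congr 1
  · exact image_congr fun x hx => if_pos hx.2
  · exact image_congr fun x hx => if_neg (not_le.2 hx.2)

theorem disjoint_image_mulVec_diamondSlab {P Q : Matrix (Fin 2) (Fin 2) ℝ}
    (hP₁₀ : P 1 0 = 0) (hP₁₁ : 0 ≤ P 1 1) (hQ₁₀ : Q 1 0 = 0) (hQ₁₁ : 0 < Q 1 1) :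
    Disjoint (P.mulVec '' diamondSlab (Ici 0)) (Q.mulVec '' diamondSlab (Iio 0)) := by
  have hrow {M : Matrix (Fin 2) (Fin 2) ℝ} (h : M 1 0 = 0) (x : Fin 2 → ℝ) :
      (M *ᵥ x) 1 = M 1 1 * x 1 := by
    simp [Matrix.mulVec, dotProduct, Fin.sum_univ_two, h]
  rw [disjoint_left]
  rintro _ ⟨x, hx, rfl⟩ ⟨z, hz, hzx⟩
  have hPx : 0 ≤ (P *ᵥ x) 1 := hrow hP₁₀ x ▸ mul_nonneg hP₁₁ hx.2
  have hQz : (Q *ᵥ z) 1 < 0 := hrow hQ₁₀ z ▸ mul_neg_of_pos_of_neg hQ₁₁ hz.2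
  rw [hzx] at hQz
  exact hQz.not_ge hPx

theorem setIntegral_sq_image_diamondSlabs {P Q : Matrix (Fin 2) (Fin 2) ℝ} (hP : P.det ≠ 0)
    (hQ : Q.det ≠ 0)
    (hPQ : Disjoint (P.mulVec '' diamondSlab (Ici 0)) (Q.mulVec '' diamondSlab (Iio 0))) :
    ∫ x in P.mulVec '' diamondSlab (Ici 0) ∪ Q.mulVec '' diamondSlab (Iio 0), (x 0 ^ 2 + x 1 ^ 2)
      = (|P.det| * ∑ i, ∑ j, P i j ^ 2 + |Q.det| * ∑ i, ∑ j, Q i j ^ 2) / 6 := by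
  have hcont : Continuous fun x : Fin 2 → ℝ => x 0 ^ 2 + x 1 ^ 2 := by fun_prop
  rw [setIntegral_union hPQ
      (Matrix.measurableSet_image_mulVec hQ (measurableSet_diamondSlab measurableSet_Iio))
      (integrableOn_image_mulVec_diamondSlab hcont P _)
      (integrableOn_image_mulVec_diamondSlab hcont Q _),
    setIntegral_sq_image_mulVec_of_isotropic (measurableSet_diamondSlab measurableSet_Ici)
      (fun A B C => by simpa only [zero_add, div_eq_mul_inv]
        using setIntegral_diamondSlab_Ici_quadratic 0 A B C) hP,
    setIntegral_sq_image_mulVec_of_isotropic (measurableSet_diamondSlab measurableSet_Iio)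
      (fun A B C => by simpa only [zero_add, div_eq_mul_inv]
        using setIntegral_diamondSlab_Iio_quadratic 0 A B C) hQ]
  ring

theorem area_image_diamondSlabs {P Q : Matrix (Fin 2) (Fin 2) ℝ} (hQ : Q.det ≠ 0)
    (hPQ : Disjoint (P.mulVec '' diamondSlab (Ici 0)) (Q.mulVec '' diamondSlab (Iio 0))) :
    area (P.mulVec '' diamondSlab (Ici 0) ∪ Q.mulVec '' diamondSlab (Iio 0))
      = |P.det| + |Q.det| := by
  rw [area, measure_union hPQ
      (Matrix.measurableSet_image_mulVec hQ (measurableSet_diamondSlab measurableSet_Iio)),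
    Matrix.volume_image_mulVec, Matrix.volume_image_mulVec, volume_diamondSlab_Ici,
    volume_diamondSlab_Iio, mul_one, mul_one, ← ENNReal.ofReal_add (abs_nonneg _) (abs_nonneg _),
    ENNReal.toReal_ofReal (by positivity)]

/-- For the piecewise linear map `T` equal to `T₊ = ((a,c₊),(0,b))` on the upper
halfplane and `T₋ = ((a,c₋),(0,b))` on the lower halfplane (`a ≠ 0`, `b > 0`), and `D`
the square with vertices `(±1,0),(0,±1)`:
`(1/4)(‖T₊⁻¹‖²_HS + ‖T₋⁻¹‖²_HS) = [I₀/A³](T(D)) / [I₀/A³](D)`,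
where `I₀(E) = ∫_E |x|² dx`. -/
theorem piecewise_linear_hs_inertia (a b cp cm : ℝ) (ha : a ≠ 0) (hb : 0 < b) :
    let Tp : Matrix (Fin 2) (Fin 2) ℝ := !![a, cp; 0, b]
    let Tm : Matrix (Fin 2) (Fin 2) ℝ := !![a, cm; 0, b]
    let Tmap : (Fin 2 → ℝ) → (Fin 2 → ℝ) :=
      fun x => if 0 ≤ x 1 then Tp.mulVec x else Tm.mulVec x
    (1 / 4) * ((∑ i : Fin 2, ∑ j : Fin 2, (Tp⁻¹ i j) ^ 2)
        + (∑ i : Fin 2, ∑ j : Fin 2, (Tm⁻¹ i j) ^ 2))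
      = ((∫ x in Tmap '' diamondSquare, (x 0 ^ 2 + x 1 ^ 2))
            / area (Tmap '' diamondSquare) ^ 3)
        / ((∫ x in diamondSquare, (x 0 ^ 2 + x 1 ^ 2)) / area diamondSquare ^ 3) := by
  intro Tp Tm Tmap
  have hdet (c : ℝ) : (!![a, c; 0, b]).det = a * b := by simp [Matrix.det_fin_two_of]
  have hdet_ne (c : ℝ) : (!![a, c; 0, b]).det ≠ 0 := hdet c ▸ mul_ne_zero ha hb.ne'
  have hsq (c : ℝ) : ∑ i, ∑ j, (!![a, c; 0, b]) i j ^ 2 = a ^ 2 + c ^ 2 + b ^ 2 := by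
    simp [Fin.sum_univ_two]
  have hsq_one : ∑ i, ∑ j, (1 : Matrix (Fin 2) (Fin 2) ℝ) i j ^ 2 = 2 := by
    norm_num [Fin.sum_univ_two]
  have hD : diamondSquare = (1 : Matrix (Fin 2) (Fin 2) ℝ).mulVec '' diamondSlab (Ici 0)
      ∪ (1 : Matrix (Fin 2) (Fin 2) ℝ).mulVec '' diamondSlab (Iio 0) := by
    simp [diamondSlab_Ici_union_Iio]
  have hTdisj := disjoint_image_mulVec_diamondSlab (P := Tp) (Q := Tm) rfl hb.le rfl hb
  have hDdisj := disjoint_image_mulVec_diamondSlab (P := 1) (Q := 1) rfl zero_le_one rfl one_pos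
  rw [image_ite_diamondSquare,
    setIntegral_sq_image_diamondSlabs (hdet_ne cp) (hdet_ne cm) hTdisj,
    area_image_diamondSlabs (hdet_ne cm) hTdisj, hD,
    setIntegral_sq_image_diamondSlabs (by simp) (by simp) hDdisj,
    area_image_diamondSlabs (by simp) hDdisj, Matrix.sum_sq_inv_fin_two,
    Matrix.sum_sq_inv_fin_two, hdet, hdet, hsq, hsq, hsq_one, Matrix.det_one, abs_one,
    ← sq_abs (a * b)]
  have hab : 0 < |a * b| := abs_pos.2 (mul_ne_zero ha hb.ne')
  field_simp
  ring
end
end
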